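/- Let x ∈ ℝ^d, let Q_k be a cube containing x with dyadic parent Q_k*, and let Q' be any cube with x ∈ Q' and Q' ⊄ 2Q_k*. Then the side length of Q' exceeds that of Q_k, and Q_k* ⊂ 5Q'. Consequently, for a nonnegative g ∈ L¹_loc, if (1/|Q|)∫_Q g ≤ λ for every cube Q containing Q_k*, then for every x ∈ Q_k: M(g)(x) ≤ max{ M_{2Q_k*}(g)(x), 5^d λ }, where M_{2Q_k*} is the maximal operator localized to cubes contained in 2Q_k* and M is the (cube-based) Hardy–Littlewood maximal operator. -/
import Mathlib


open MeasureTheory ENNReal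

/-- The closed cube in `ℝ^d` with center `c` and side length `l`. -/
def cube (d : ℕ) (c : Fin d → ℝ) (l : ℝ) : Set (Fin d → ℝ) :=
  {x | ∀ i, |x i - c i| ≤ l / 2}

/-- Average of `g` over the cube with center `c` and side `l`. -/
noncomputable def cubeAvg (d : ℕ) (g : (Fin d → ℝ) → ℝ≥0∞) (c : Fin d → ℝ) (l : ℝ) : ℝ≥0∞ :=
  (volume (cube d c l))⁻¹ * ∫⁻ y in cube d c l, g y

/-- The cube-based (uncentered) Hardy–Littlewood maximal function. -/
noncomputable def cubeMaximal (d : ℕ) (g : (Fin d → ℝ) → ℝ≥0∞) (x : Fin d → ℝ) : ℝ≥0∞ :=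
  ⨆ (c : Fin d → ℝ) (l : ℝ) (_ : 0 < l) (_ : x ∈ cube d c l), cubeAvg d g c l

/-- The maximal function localized to cubes contained in `S`. -/
noncomputable def cubeMaximalLoc (d : ℕ) (S : Set (Fin d → ℝ))
    (g : (Fin d → ℝ) → ℝ≥0∞) (x : Fin d → ℝ) : ℝ≥0∞ :=
  ⨆ (c : Fin d → ℝ) (l : ℝ) (_ : 0 < l) (_ : x ∈ cube d c l)
    (_ : cube d c l ⊆ S), cubeAvg d g c l

lemma cube_eq_pi (d : ℕ) (c : Fin d → ℝ) (l : ℝ) :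
    cube d c l = Set.pi Set.univ (fun i => Set.Icc (c i - l/2) (c i + l/2)) := by
  ext x
  simp only [cube, Set.mem_setOf_eq, Set.mem_pi, Set.mem_univ, forall_true_left,
    Set.mem_Icc, abs_le]
  constructor <;> intro h i <;> have := h i <;> constructor <;> linarith [this.1, this.2]

lemma volume_cube (d : ℕ) (c : Fin d → ℝ) (l : ℝ) :
    volume (cube d c l) = ENNReal.ofReal l ^ d := by
  have h : ∀ i : Fin d, c i + l/2 - (c i - l/2) = l := fun i => by ring
  rw [cube_eq_pi, volume_pi_pi]
  simp [Real.volume_Icc, h]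

lemma cube_mono (d : ℕ) (c : Fin d → ℝ) {l l' : ℝ} (h : l ≤ l') :
    cube d c l ⊆ cube d c l' := fun x hx i => le_trans (hx i) (by linarith)

lemma cube_geom (d : ℕ) (ck cs : Fin d → ℝ) (lk : ℝ) (hlk : 0 < lk)
    (hparent : cube d ck lk ⊆ cube d cs (2 * lk))
    (x : Fin d → ℝ) (hx : x ∈ cube d ck lk)
    (c' : Fin d → ℝ) (l' : ℝ) (hl' : 0 < l') (hx' : x ∈ cube d c' l')
    (hnc : ¬ (cube d c' l' ⊆ cube d cs (4 * lk))) :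
    lk < l' ∧ cube d cs (2 * lk) ⊆ cube d c' (5 * l') := by
  rw [Set.not_subset] at hnc
  obtain ⟨y, hy, hyn⟩ := hnc
  simp only [cube, Set.mem_setOf_eq, not_forall, not_le] at hyn
  obtain ⟨i, hyi⟩ := hyn
  have hxs := hparent hx
  have h1 := abs_le.mp (hxs i)
  have h2 := abs_le.mp (hx' i)
  have h3 := abs_le.mp (hy i)
  have hll : lk < l' := by
    rcases lt_abs.mp hyi with h | h <;>
      [ (have := h1.2; have := h2.1; have := h3.2);
        (have := h1.1; have := h2.2; have := h3.1) ] <;> linarith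
  refine ⟨hll, fun z hz j => ?_⟩
  have hz1 := abs_le.mp (hz j)
  have hx1 := abs_le.mp (hxs j)
  have hx2 := abs_le.mp (hx' j)
  rw [abs_le]
  constructor <;> [(have := hz1.1; have := hx1.2; have := hx2.1);
    (have := hz1.2; have := hx1.1; have := hx2.2)] <;> linarith

/-- Localization of the maximal operator: let `Q_k = cube(ck, lk) ∋ x` with dyadic
parent `Q_k* = cube(c*, 2 lk) ⊇ Q_k`. (1) Any cube `Q' ∋ x` not contained in `2Q_k*`
has side length `> lk` and satisfies `Q_k* ⊆ 5Q'`. (2) If every cube `Q ⊇ Q_k*`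
carries average `⨍_Q g ≤ λ`, then `M g ≤ max (M_{2Q_k*} g, 5^d λ)` on `Q_k`. -/
theorem cube_maximal_localization (d : ℕ) (ck cs : Fin d → ℝ) (lk : ℝ) (hlk : 0 < lk)
    (hparent : cube d ck lk ⊆ cube d cs (2 * lk)) :
    (∀ (x : Fin d → ℝ), x ∈ cube d ck lk →
      ∀ (c' : Fin d → ℝ) (l' : ℝ), 0 < l' → x ∈ cube d c' l' →
        ¬ (cube d c' l' ⊆ cube d cs (4 * lk)) →
        lk < l' ∧ cube d cs (2 * lk) ⊆ cube d c' (5 * l')) ∧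
    (∀ (g : (Fin d → ℝ) → ℝ≥0∞), Measurable g →
      ∀ lam : ℝ≥0∞,
      (∀ (c : Fin d → ℝ) (l : ℝ), 0 < l → cube d cs (2 * lk) ⊆ cube d c l →
        cubeAvg d g c l ≤ lam) →
      ∀ x ∈ cube d ck lk,
        cubeMaximal d g x ≤
          max (cubeMaximalLoc d (cube d cs (4 * lk)) g x) (5 ^ d * lam)) := by
  constructor
  · exact fun x hx c' l' hl' hx' hnc => cube_geom d ck cs lk hlk hparent x hx c' l' hl' hx' hnc
  intro g _hg lam hlam x hx
  rw [cubeMaximal]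
  refine iSup_le fun c' => iSup_le fun l' => iSup_le fun hl' => iSup_le fun hx' => ?_
  by_cases hsub : cube d c' l' ⊆ cube d cs (4 * lk)
  · exact le_max_of_le_left <| le_iSup_of_le c' <| le_iSup_of_le l' <|
      le_iSup_of_le hl' <| le_iSup_of_le hx' <| le_iSup_of_le hsub le_rfl
  · obtain ⟨hll, hincl⟩ := cube_geom d ck cs lk hlk hparent x hx c' l' hl' hx' hsub
    have h5l : (0:ℝ) < 5 * l' := by linarith
    have havg5 : cubeAvg d g c' (5 * l') ≤ lam := hlam c' (5 * l') h5l hincl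
    have hkey : cubeAvg d g c' l' ≤ 5 ^ d * cubeAvg d g c' (5 * l') := by
      rw [cubeAvg, cubeAvg, volume_cube, volume_cube,
        ENNReal.ofReal_mul (by norm_num : (0:ℝ) ≤ 5)]
      have h5 : ENNReal.ofReal (5:ℝ) = 5 := by
        rw [show (5:ℝ≥0∞) = ENNReal.ofReal (5:ℝ) by simp]
      rw [h5, mul_pow,
        ENNReal.mul_inv (Or.inl (by positivity)) (Or.inl (pow_ne_top (by norm_num))),
        ← mul_assoc, ← mul_assoc,
        ENNReal.mul_inv_cancel (by positivity) (pow_ne_top (by norm_num)), one_mul]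
      exact mul_le_mul_right (lintegral_mono_set (cube_mono d c' (by linarith))) _
    calc cubeAvg d g c' l' ≤ 5 ^ d * cubeAvg d g c' (5 * l') := hkey
      _ ≤ 5 ^ d * lam := mul_le_mul_right havg5 _
      _ ≤ _ := le_max_right _ _
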